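/- Let q : SL(2, ℤ) →* H be a surjective group homomorphism onto a group H that is not cyclic. Then either H is infinite, or Nat.card H > 6, or H is isomorphic as a group to SL(2, ZMod 2) (a group of cardinality 6). -/

import Mathlib

open Matrix MatrixGroups ModularGroup Subgroup

private lemma genST_aux : ∀ (n : ℕ) (g : Matrix.SpecialLinearGroup (Fin 2) ℤ),
    (g 1 0).natAbs = n →
    g ∈ Subgroup.closure ({S, T} : Set (Matrix.SpecialLinearGroup (Fin 2) ℤ)) := by
  intro n
  induction n using Nat.strong_induction_on with
  | _ n ih =>
    intro g hg
    have hS : S ∈ Subgroup.closure ({S, T} : Set (Matrix.SpecialLinearGroup (Fin 2) ℤ)) :=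
      Subgroup.subset_closure (by simp)
    have hT : T ∈ Subgroup.closure ({S, T} : Set (Matrix.SpecialLinearGroup (Fin 2) ℤ)) :=
      Subgroup.subset_closure (by simp)
    have hdet : g 0 0 * g 1 1 - g 0 1 * g 1 0 = 1 := by
      have := g.2
      rwa [Matrix.det_fin_two] at this
    rcases eq_or_ne (g 1 0) 0 with hc | hc
    · rw [hc, mul_zero, sub_zero] at hdet
      rcases Int.mul_eq_one_iff_eq_one_or_neg_one.mp hdet with ⟨ha, hd⟩ | ⟨ha, hd⟩
      · have : g = T ^ (g 0 1) := by
          apply Subtype.ext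
          rw [coe_T_zpow]
          ext i j
          fin_cases i <;> fin_cases j <;> simp [ha, hd, hc]
        rw [this]
        exact zpow_mem hT _
      · have : g = S ^ 2 * T ^ (-(g 0 1)) := by
          apply Subtype.ext
          rw [Matrix.SpecialLinearGroup.coe_mul, coe_T_zpow]
          have hS2 : ((S ^ 2 : Matrix.SpecialLinearGroup (Fin 2) ℤ) :
              Matrix (Fin 2) (Fin 2) ℤ) = !![-1,0;0,-1] := by
            rw [pow_two, Matrix.SpecialLinearGroup.coe_mul, coe_S]
            norm_num [Matrix.mul_fin_two]
          rw [hS2]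
          ext i j
          fin_cases i <;> fin_cases j <;>
            simp [Matrix.mul_apply, Fin.sum_univ_two, ha, hd, hc]
        rw [this]
        exact mul_mem (pow_mem hS 2) (zpow_mem hT _)
    · set k : ℤ := g 0 0 / g 1 0 with hk
      set h : Matrix.SpecialLinearGroup (Fin 2) ℤ := S * (T ^ (-k) * g) with hh
      have hcoe : (h : Matrix (Fin 2) (Fin 2) ℤ) =
          !![0,-1;1,0] * (!![1,-k;0,1] * (g : Matrix (Fin 2) (Fin 2) ℤ)) := by
        rw [hh, Matrix.SpecialLinearGroup.coe_mul, Matrix.SpecialLinearGroup.coe_mul, coe_T_zpow, coe_S]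
      have hent : h 1 0 = g 0 0 % g 1 0 := by
        have : h 1 0 = ((h : Matrix (Fin 2) (Fin 2) ℤ)) 1 0 := rfl
        rw [this, hcoe]
        simp [Matrix.mul_apply, Fin.sum_univ_two, Matrix.vecMul, Matrix.vecHead,
          Matrix.vecTail, dotProduct]
        rw [Int.emod_def, hk]
        ring
      have hlt : (h 1 0).natAbs < n := by
        rw [hent, ← hg]
        have h1 : 0 ≤ g 0 0 % g 1 0 := Int.emod_nonneg _ hc
        have h2 : g 0 0 % g 1 0 < |g 1 0| := Int.emod_lt_abs _ hc
        rw [Int.abs_eq_natAbs] at h2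
        omega
      have hmem : h ∈ Subgroup.closure ({S, T} : Set (Matrix.SpecialLinearGroup (Fin 2) ℤ)) :=
        ih _ hlt h rfl
      have : g = T ^ k * (S⁻¹ * h) := by rw [hh]; group
      rw [this]
      exact mul_mem (zpow_mem hT _) (mul_mem (inv_mem hS) hmem)

private lemma genST :
    Subgroup.closure ({S, T} : Set (Matrix.SpecialLinearGroup (Fin 2) ℤ)) = ⊤ := by
  rw [eq_top_iff]
  exact fun g _ => genST_aux _ g rfl

private lemma ST_rel : (S * T) ^ 3 = S ^ 2 := by
  apply Subtype.ext
  show ((S*T)^3 : Matrix.SpecialLinearGroup (Fin 2) ℤ).1 =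
    ((S^2 : Matrix.SpecialLinearGroup (Fin 2) ℤ) : Matrix (Fin 2) (Fin 2) ℤ)
  rw [pow_succ, pow_succ, pow_one, pow_two]
  simp only [Matrix.SpecialLinearGroup.coe_mul, coe_S, coe_T]
  norm_num [Matrix.mul_fin_two]

private lemma cyclic_of_comm_quot {H : Type*} [Group H]
    (q : Matrix.SpecialLinearGroup (Fin 2) ℤ →* H)
    (hq : Function.Surjective q) (hcomm : ∀ a b : H, a * b = b * a) : IsCyclic H := by
  have hto : (⊤ : Subgroup H) = Subgroup.closure {q S, q T} := by
    have := MonoidHom.map_closure q {S, T}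
    rw [genST, Set.image_insert_eq, Set.image_singleton] at this
    rw [← this, ← MonoidHom.range_eq_map, MonoidHom.range_eq_top_of_surjective q hq]
  have hSrel : q S = (q T) ^ (-3 : ℤ) := by
    have h1 : (q S * q T) ^ 3 = (q S) ^ 2 := by
      rw [← _root_.map_mul, ← _root_.map_pow, ← _root_.map_pow, ST_rel]
    have h2 : (q S) ^ 3 * (q T) ^ 3 = (q S) ^ 2 := by
      rw [← Commute.mul_pow (show Commute (q S) (q T) from hcomm _ _)]; exact h1
    have h3 : q S * (q T) ^ 3 = 1 := by
      apply mul_left_cancel (a := (q S) ^ 2)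
      rw [mul_one, ← mul_assoc, ← pow_succ, h2]
    have : q S = ((q T) ^ 3)⁻¹ := eq_inv_of_mul_eq_one_left h3
    rw [this]
    rw [show ((-3 : ℤ)) = -(3 : ℕ) by norm_num, _root_.zpow_neg, zpow_natCast]
  constructor
  refine ⟨q T, fun x => ?_⟩
  have hx : x ∈ Subgroup.closure {q S, q T} := hto ▸ Subgroup.mem_top x
  have : Subgroup.closure {q S, q T} ≤ Subgroup.zpowers (q T) := by
    rw [Subgroup.closure_le]
    intro y hy
    rcases hy with h | h
    · rw [h, hSrel]; exact Subgroup.zpow_mem _ (Subgroup.mem_zpowers _) _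
    · rw [h]; exact Subgroup.mem_zpowers _
  exact this hx

/-- permCongr as a MulEquiv -/
private def permMulEquiv {α β : Type*} (e : α ≃ β) : Equiv.Perm α ≃* Equiv.Perm β :=
  { Equiv.permCongr e with
    map_mul' := fun p q => by
      ext x
      simp [Equiv.permCongr] }

private lemma nonabelian_six {G : Type*} [Group G] (h6 : Nat.card G = 6)
    (hna : ¬ ∀ a b : G, a * b = b * a) : Nonempty (G ≃* Equiv.Perm (Fin 3)) := by
  classical
  have hfin : Finite G := Nat.finite_of_card_ne_zero (by omega)
  have hp2 : Fact (Nat.Prime 2) := ⟨by norm_num⟩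
  obtain ⟨P⟩ : Nonempty (Sylow 2 G) := inferInstance
  have hP : Nat.card P = 2 := by
    rw [Sylow.card_eq_multiplicity, h6,
      show (6:ℕ) = 2*3 by norm_num, Nat.factorization_mul (by norm_num) (by norm_num),
      Nat.Prime.factorization (by norm_num), Nat.Prime.factorization (by norm_num)]
    simp
  have hQP : Nat.card (G ⧸ (P : Subgroup G)) = 3 := by
    have := Subgroup.card_eq_card_quotient_mul_card_subgroup (P : Subgroup G)
    rw [h6, hP] at this
    omega
  set φ := MulAction.toPermHom G (G ⧸ (P : Subgroup G)) with hφ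
  have hker : φ.ker = (P : Subgroup G).normalCore := (Subgroup.normalCore_eq_ker _).symm
  have hbot : φ.ker = ⊥ := by
    by_contra hne
    have hle : φ.ker ≤ (P : Subgroup G) := hker ▸ Subgroup.normalCore_le _
    have hdvd : Nat.card φ.ker ∣ 2 := by
      have := Subgroup.card_dvd_of_le hle
      rwa [hP] at this
    have hcard : Nat.card φ.ker = 2 := by
      have h1 : Nat.card φ.ker ≠ 1 := by
        intro h
        exact hne ((Subgroup.card_eq_one).mp h)
      have h2 := Nat.le_of_dvd (by norm_num) hdvd
      have h3 : 0 < Nat.card φ.ker := Nat.card_pos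
      omega
    have hPker : φ.ker = (P : Subgroup G) :=
      Subgroup.eq_of_le_of_card_ge hle (by rw [hP, hcard])
    have hnorm : (P : Subgroup G).Normal := hPker ▸ φ.normal_ker
    have huniq := (Nat.card_eq_two_iff' (1 : (P : Subgroup G))).mp hP
    obtain ⟨k, hk1, hkuniq⟩ := huniq
    have hcent : (k : G) ∈ Subgroup.center G := by
      rw [Subgroup.mem_center_iff]
      intro g
      have hmem : g * (k : G) * g⁻¹ ∈ (P : Subgroup G) := hnorm.conj_mem _ k.2 g
      have hne1 : (⟨g * (k : G) * g⁻¹, hmem⟩ : (P : Subgroup G)) ≠ 1 := by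
        intro h
        apply hk1
        have h' : g * (k : G) * g⁻¹ = 1 := Subtype.ext_iff.mp h
        exact Subtype.ext (conj_eq_one_iff.mp h')
      have := hkuniq _ hne1
      have heq : g * (k : G) * g⁻¹ = (k : G) := Subtype.ext_iff.mp this
      calc g * (k:G) = g * (k:G) * g⁻¹ * g := by group
        _ = (k:G) * g := by rw [heq]
    have hZne : (⟨(k : G), hcent⟩ : Subgroup.center G) ≠ 1 := by
      intro h
      have hk : (k : G) = 1 := congrArg Subtype.val h
      exact hk1 (Subtype.ext hk)
    have hZnontriv : Nontrivial (Subgroup.center G) := ⟨_, _, hZne⟩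
    have hZcard : 2 ≤ Nat.card (Subgroup.center G) := by
      have := Fintype.ofFinite (Subgroup.center G)
      rw [Nat.card_eq_fintype_card]
      exact Fintype.one_lt_card_iff_nontrivial.mpr hZnontriv
    have hqc := Subgroup.card_eq_card_quotient_mul_card_subgroup (Subgroup.center G)
    rw [h6] at hqc
    have hdv : Nat.card (G ⧸ Subgroup.center G) ∣ 6 := Dvd.intro _ hqc.symm
    have hle3 : Nat.card (G ⧸ Subgroup.center G) ≤ 3 := by
      have h0 : 0 < Nat.card (G ⧸ Subgroup.center G) := Nat.card_pos
      nlinarith [hqc, hZcard, h0]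
    have hcyc : IsCyclic (G ⧸ Subgroup.center G) := by
      have h0 : 0 < Nat.card (G ⧸ Subgroup.center G) := Nat.card_pos
      interval_cases h : Nat.card (G ⧸ Subgroup.center G)
      · have : Subsingleton (G ⧸ Subgroup.center G) := Nat.card_eq_one_iff_unique.mp h |>.1
        infer_instance
      · exact isCyclic_of_prime_card (p := 2) h
      · exact isCyclic_of_prime_card (p := 3) h
    exact hna (commutative_of_cyclic_center_quotient (QuotientGroup.mk' (Subgroup.center G))
      (by rw [QuotientGroup.ker_mk']))
  have hinj : Function.Injective φ := (MonoidHom.ker_eq_bot_iff φ).mp hbot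
  have : Fintype (G ⧸ (P : Subgroup G)) := Fintype.ofFinite _
  have hbij : Function.Bijective φ := by
    rw [Nat.bijective_iff_injective_and_card]
    refine ⟨hinj, ?_⟩
    rw [h6, Nat.card_eq_fintype_card, Fintype.card_perm, ← Nat.card_eq_fintype_card, hQP]
    rfl
  have e1 : G ≃* Equiv.Perm (G ⧸ (P : Subgroup G)) := MulEquiv.ofBijective φ hbij
  have e0 : (G ⧸ (P : Subgroup G)) ≃ Fin 3 :=
    Fintype.equivFinOfCardEq (by rw [← Nat.card_eq_fintype_card, hQP])
  exact ⟨e1.trans (permMulEquiv e0)⟩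

private lemma SL2_Zmod2_card : Nat.card (Matrix.SpecialLinearGroup (Fin 2) (ZMod 2)) = 6 := by
  rw [Nat.card_eq_fintype_card]
  decide

private lemma SL2_Zmod2_nonabelian :
    ¬ ∀ a b : Matrix.SpecialLinearGroup (Fin 2) (ZMod 2), a * b = b * a := by
  intro hab
  have hA : Matrix.det !![(1 : ZMod 2),1;0,1] = 1 := by
    rw [Matrix.det_fin_two_of]; decide
  have hB : Matrix.det !![(0 : ZMod 2),1;1,0] = 1 := by
    rw [Matrix.det_fin_two_of]; decide
  have h := hab ⟨_, hA⟩ ⟨_, hB⟩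
  have h2 := congrArg (fun g : Matrix.SpecialLinearGroup (Fin 2) (ZMod 2) =>
    (g : Matrix (Fin 2) (Fin 2) (ZMod 2)) 0 0) h
  erw [Matrix.SpecialLinearGroup.coe_mul, Matrix.SpecialLinearGroup.coe_mul] at h2
  simp [Matrix.SpecialLinearGroup.coe_mul, Matrix.mul_apply, Fin.sum_univ_two] at h2

theorem stmt8 {H : Type*} [Group H]
    (q : Matrix.SpecialLinearGroup (Fin 2) ℤ →* H) (hq : Function.Surjective q)
    (hH : ¬ IsCyclic H) :
    Infinite H ∨ 6 < Nat.card H ∨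
      Nonempty (H ≃* Matrix.SpecialLinearGroup (Fin 2) (ZMod 2)) := by
  rcases finite_or_infinite H with hf | hi
  · by_cases h6 : 6 < Nat.card H
    · exact Or.inr (Or.inl h6)
    have hnc : ¬ ∀ a b : H, a * b = b * a := fun hcomm =>
      hH (cyclic_of_comm_quot q hq hcomm)
    have hp2 : Fact (Nat.Prime 2) := ⟨by norm_num⟩
    have hp3 : Fact (Nat.Prime 3) := ⟨by norm_num⟩
    have hp5 : Fact (Nat.Prime 5) := ⟨by norm_num⟩
    have h0 : 0 < Nat.card H := Nat.card_pos
    push_neg at h6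
    interval_cases hn : Nat.card H
    · exact absurd (@isCyclic_of_subsingleton _ _ (Nat.card_eq_one_iff_unique.mp hn).1) hH
    · exact absurd (isCyclic_of_prime_card (p := 2) hn) hH
    · exact absurd (isCyclic_of_prime_card (p := 3) hn) hH
    · exact absurd (IsPGroup.commutative_of_card_eq_prime_sq (p := 2)
        (by rw [hn]; norm_num)) hnc
    · exact absurd (isCyclic_of_prime_card (p := 5) hn) hH
    · obtain ⟨e⟩ := nonabelian_six hn hnc
      obtain ⟨e2⟩ := nonabelian_six SL2_Zmod2_card SL2_Zmod2_nonabelian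
      exact Or.inr (Or.inr ⟨e.trans e2.symm⟩)
  · exact Or.inl hi
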